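/- arXiv:2208.14850 — 2 statements merged into one kernel-verified Lean document; each statement's English description precedes it below -/
import Mathlib

section
/- If (a_1, …, a_m) and (b_1, …, b_n) are complementary sequences of integers all ≥ 2, then a_m = 2 or b_n = 2. -/
/-- Negative continued fraction `[a₁, …, aₙ]⁻`. -/
def ncf : List ℚ → ℚ
  | [] => 0
  | [a] => a
  | a :: b :: l => a - 1 / ncf (b :: l)

/-- Negative continued fraction of a list of integers. -/
def ncfZ (l : List ℤ) : ℚ := ncf (l.map (fun x => (x : ℚ)))

/-- Two sequences of integers, all ≥ 2, are complementary if the reciprocals of their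
negative continued fractions sum to 1. -/
def Complementary (a b : List ℤ) : Prop :=
  a ≠ [] ∧ b ≠ [] ∧ (∀ x ∈ a, 2 ≤ x) ∧ (∀ x ∈ b, 2 ≤ x) ∧
    1 / ncfZ a + 1 / ncfZ b = 1

/-- The standard negative definite bilinear form on `ℤ^N`. -/
def negForm {N : ℕ} (x y : Fin N → ℤ) : ℤ := -∑ i, x i * y i

/-!
Write `x`, `y` for the two continued fractions, so that complementarity reads
`(x - 1) * (y - 1) = 1`. A list with head `c` has value in `(c - 1, c]`, with equality only for
the singleton `[c]`. Hence, unless the pair is `[2]`, `[2]`, one head `c` is at least `3`; then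
`x > 2` forces `y < 2`, so the other list is `2 :: s` with `s ≠ []`, and since
`y = 2 - 1 / ncfZ s`, the pair `(c - 1) :: t`, `s` is again complementary. This step keeps the
last entries (when `t ≠ []`) and shortens the pair, so induction on the total length reduces
everything to a singleton `[c]`, whose complement the same step whittles down to `[2]`.
-/

@[simp]
theorem ncfZ_singleton (c : ℤ) : ncfZ [c] = c := rfl

@[simp]
theorem ncfZ_cons_cons (c d : ℤ) (l : List ℤ) : ncfZ (c :: d :: l) = c - 1 / ncfZ (d :: l) := rfl

theorem ncfZ_cons_sub_one (c : ℤ) (l : List ℤ) : ncfZ ((c - 1) :: l) = ncfZ (c :: l) - 1 := by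
  cases l <;> simp only [ncfZ_singleton, ncfZ_cons_cons] <;> push_cast <;> ring

theorem sub_one_lt_ncfZ_cons {c : ℤ} {l : List ℤ} (h : ∀ x ∈ c :: l, 2 ≤ x) :
    c - 1 < ncfZ (c :: l) := by
  induction l generalizing c with
  | nil => simp
  | cons d l ih =>
    obtain ⟨-, hl⟩ := List.forall_mem_cons.mp h
    have hd : (2 : ℚ) ≤ d := by exact_mod_cast hl d List.mem_cons_self
    have h1 : 1 < ncfZ (d :: l) := by linarith [ih hl]
    rw [ncfZ_cons_cons, sub_lt_sub_iff_left, div_lt_one (by linarith)]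
    exact h1

theorem one_lt_ncfZ {l : List ℤ} (hl : l ≠ []) (h : ∀ x ∈ l, 2 ≤ x) : 1 < ncfZ l := by
  obtain ⟨c, l, rfl⟩ := List.exists_cons_of_ne_nil hl
  have hc : (2 : ℚ) ≤ c := by exact_mod_cast h c List.mem_cons_self
  linarith [sub_one_lt_ncfZ_cons h]

theorem ncfZ_cons_cons_lt {c d : ℤ} {l : List ℤ} (h : ∀ x ∈ c :: d :: l, 2 ≤ x) :
    ncfZ (c :: d :: l) < c := by
  have h1 := one_lt_ncfZ (List.cons_ne_nil d l) (List.forall_mem_cons.mp h).2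
  have : 0 < 1 / ncfZ (d :: l) := one_div_pos.mpr (by linarith)
  rw [ncfZ_cons_cons]
  linarith

theorem ncfZ_cons_le {c : ℤ} {l : List ℤ} (h : ∀ x ∈ c :: l, 2 ≤ x) : ncfZ (c :: l) ≤ c := by
  cases l with
  | nil => simp
  | cons d l => exact (ncfZ_cons_cons_lt h).le

theorem one_div_add_one_div_eq_one_iff {K : Type*} [Field K] {x y : K} (hx : x ≠ 0) (hy : y ≠ 0) :
    1 / x + 1 / y = 1 ↔ (x - 1) * (y - 1) = 1 := by
  rw [div_add_div _ _ hx hy, div_eq_one_iff_eq (mul_ne_zero hx hy)]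
  constructor <;> intro h <;> linear_combination -h

theorem complementary_iff {a b : List ℤ} :
    Complementary a b ↔ a ≠ [] ∧ b ≠ [] ∧ (∀ x ∈ a, 2 ≤ x) ∧ (∀ x ∈ b, 2 ≤ x) ∧
      (ncfZ a - 1) * (ncfZ b - 1) = 1 := by
  refine and_congr_right fun ha => and_congr_right fun hb => and_congr_right fun h2a =>
    and_congr_right fun h2b => one_div_add_one_div_eq_one_iff ?_ ?_
  · exact (zero_lt_one.trans (one_lt_ncfZ ha h2a)).ne'
  · exact (zero_lt_one.trans (one_lt_ncfZ hb h2b)).ne'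

namespace Complementary

variable {a b : List ℤ}

theorem symm (h : Complementary a b) : Complementary b a := by
  obtain ⟨ha, hb, h2a, h2b, heq⟩ := h
  exact ⟨hb, ha, h2b, h2a, by rw [add_comm, heq]⟩

theorem sub_one_mul_sub_one (h : Complementary a b) : (ncfZ a - 1) * (ncfZ b - 1) = 1 :=
  (complementary_iff.mp h).2.2.2.2

theorem eq_two_of_singleton {c d : ℤ} (h : Complementary [c] [d]) : d = 2 := by
  obtain ⟨-, -, h2a, h2b, -⟩ := id h
  have hc : (2 : ℚ) ≤ c := by exact_mod_cast h2a c List.mem_cons_self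
  have hd : (2 : ℚ) ≤ d := by exact_mod_cast h2b d List.mem_cons_self
  have heq := h.sub_one_mul_sub_one
  simp only [ncfZ_singleton] at heq
  have : (d : ℚ) ≤ 2 := by nlinarith
  exact_mod_cast le_antisymm this hd

theorem three_le_head_or {c d e : ℤ} {t s : List ℤ} (h : Complementary (c :: t) (d :: e :: s)) :
    3 ≤ c ∨ 3 ≤ d := by
  obtain ⟨ha, hb, h2a, h2b, -⟩ := id h
  by_contra! hlt
  have hc : (c : ℚ) = 2 := by exact_mod_cast le_antisymm (by omega) (h2a c List.mem_cons_self)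
  have hd : (d : ℚ) = 2 := by exact_mod_cast le_antisymm (by omega) (h2b d List.mem_cons_self)
  have hx := ncfZ_cons_le h2a
  have hy := ncfZ_cons_cons_lt h2b
  have hx1 := one_lt_ncfZ ha h2a
  have hy1 := one_lt_ncfZ hb h2b
  nlinarith [h.sub_one_mul_sub_one]

theorem reduce_of_three_le_head {c d : ℤ} {t s : List ℤ} (h : Complementary (c :: t) (d :: s))
    (hc : 3 ≤ c) : d = 2 ∧ s ≠ [] ∧ Complementary ((c - 1) :: t) s := by
  obtain ⟨-, -, h2a, h2b, -⟩ := id h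
  have heq := h.sub_one_mul_sub_one
  have hx : 2 < ncfZ (c :: t) := by
    have : (3 : ℚ) ≤ c := by exact_mod_cast hc
    linarith [sub_one_lt_ncfZ_cons h2a]
  have hy : ncfZ (d :: s) < 2 := by nlinarith
  have hd : d = 2 := by
    have hd3 : (d : ℚ) < 3 := by linarith [sub_one_lt_ncfZ_cons h2b]
    have : d < 3 := by exact_mod_cast hd3
    have := h2b d List.mem_cons_self
    omega
  subst hd
  rcases s with _ | ⟨f, s⟩
  · norm_num at hy
  have hs := List.forall_mem_cons.mp h2b |>.2
  have hy' := one_lt_ncfZ (List.cons_ne_nil f s) hs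
  refine ⟨rfl, List.cons_ne_nil f s, complementary_iff.mpr ⟨List.cons_ne_nil _ _,
    List.cons_ne_nil f s, ?_, hs, ?_⟩⟩
  · exact List.forall_mem_cons.mpr ⟨by omega, (List.forall_mem_cons.mp h2a).2⟩
  · rw [ncfZ_cons_sub_one]
    rw [ncfZ_cons_cons, Int.cast_two] at heq
    field_simp at heq
    linear_combination heq

theorem getLast?_eq_two_of_singleton : ∀ {c : ℤ} {b : List ℤ}, Complementary [c] b →
    b.getLast? = some 2
  | _, [], h => absurd rfl h.2.1
  | _, [_], h => by rw [h.eq_two_of_singleton]; rfl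
  | _, _ :: _ :: _, h => by
    have hc := h.three_le_head_or.resolve_right fun hd =>
      (h.symm.reduce_of_three_le_head hd).2.1 rfl
    obtain ⟨rfl, -, h'⟩ := h.reduce_of_three_le_head hc
    rw [List.getLast?_cons_cons]
    exact getLast?_eq_two_of_singleton h'

theorem getLast?_eq_two_or : ∀ {a b : List ℤ}, Complementary a b →
    a.getLast? = some 2 ∨ b.getLast? = some 2
  | [_], _, h => .inr h.getLast?_eq_two_of_singleton
  | _, [_], h => .inl h.symm.getLast?_eq_two_of_singleton
  | _ :: _ :: _, _ :: _ :: _, h => by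
    rcases h.three_le_head_or with hc | hd
    · obtain ⟨rfl, -, h'⟩ := h.reduce_of_three_le_head hc
      simpa only [List.getLast?_cons_cons] using getLast?_eq_two_or h'
    · obtain ⟨rfl, -, h'⟩ := h.symm.reduce_of_three_le_head hd
      simpa only [List.getLast?_cons_cons, or_comm] using getLast?_eq_two_or h'
  | [], _, h => absurd rfl h.1
  | _, [], h => absurd rfl h.2.1
termination_by a b => a.length + b.length

end Complementary

theorem complementary_last_two (a b : List ℤ) (ha : a ≠ []) (hb : b ≠ [])
    (h : Complementary a b) :
    a.getLast ha = 2 ∨ b.getLast hb = 2 := by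
  simpa only [List.getLast?_eq_some_getLast ha, List.getLast?_eq_some_getLast hb,
    Option.some.injEq] using h.getLast?_eq_two_or
end

section
/- Let c ≥ 2 and d ≥ 1 be integers and define the sequence (x_j) by x_0 = 1, x_1 = d and x_{j+2} = c·x_{j+1} − x_j. Then x_j ≥ 1 for all j ≥ 0, and for every integer l ≥ 0 the negative continued fraction [(c)^{[l]}, d]^- (that is, l copies of c followed by a final d) equals x_{l+1}/x_l. -/
lemma ncf_cons (a : ℚ) (t : List ℚ) (ht : t ≠ []) :
    ncf (a :: t) = a - 1 / ncf t := by
  cases t with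
  | nil => exact absurd rfl ht
  | cons b l => rfl

lemma ncfZ_cons (a : ℤ) (t : List ℤ) (ht : t ≠ []) :
    ncfZ (a :: t) = (a : ℚ) - 1 / ncfZ t := by
  cases t with
  | nil => exact absurd rfl ht
  | cons b l => rfl

theorem ncf_constant_tail (c d : ℤ) (hc : 2 ≤ c) (hd : 1 ≤ d)
    (x : ℕ → ℤ) (hx0 : x 0 = 1) (hx1 : x 1 = d)
    (hrec : ∀ j, x (j + 2) = c * x (j + 1) - x j) :
    (∀ j, 1 ≤ x j) ∧
      ∀ l : ℕ, ncfZ (List.replicate l c ++ [d]) = (x (l + 1) : ℚ) / (x l : ℚ) := by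
  have key : ∀ j, 1 ≤ x j ∧ x j ≤ x (j + 1) := by
    intro j
    induction j with
    | zero =>
      refine ⟨by omega, ?_⟩
      show x 0 ≤ x 1
      omega
    | succ n ih =>
      have h := hrec n
      constructor
      · omega
      · nlinarith [ih.1, ih.2]
  have hpos : ∀ j, 1 ≤ x j := fun j => (key j).1
  refine ⟨hpos, ?_⟩
  intro l
  induction l with
  | zero =>
    simp [ncfZ, ncf, hx0, hx1]
  | succ n ih =>
    have hne : List.replicate n c ++ [d] ≠ ([] : List ℤ) := by
      simp
    have hxn : (x n : ℚ) ≠ 0 := by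
      have := hpos n; positivity
    have hxn1 : (x (n + 1) : ℚ) ≠ 0 := by
      have := hpos (n + 1); positivity
    rw [List.replicate_succ, List.cons_append, ncfZ_cons _ _ hne, ih, hrec n]
    push_cast
    field_simp
end
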